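/- If x1 and x2 are symmetric probability measures on the extended reals, then x1 ⊠ x2 is again a symmetric probability measure on the extended reals. -/

import Mathlib

open MeasureTheory Real Filter Topology Polynomial

noncomputable section

/-- The space of finite signed Borel measures on the extended reals `ℝ̄`. -/
abbrev SM := MeasureTheory.SignedMeasure EReal

namespace SCLDPC

/-- The weight `e^{-α/2}` as an extended nonnegative real (`+∞` at `α = -∞`). -/
def wt (α : EReal) : ENNReal :=
  if α = ⊥ then ⊤ else if α = ⊤ then 0 else ENNReal.ofReal (Real.exp (-(α.toReal) / 2))

/-- A (nonnegative) Borel measure `μ` on `ℝ̄` is symmetric if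
`∫_{-E} e^{-α/2} μ(dα) = ∫_{E} e^{-α/2} μ(dα)` for every Borel set `E`
(stated with extended nonnegative integrals, which is equivalent to requiring
equality whenever one of the two sides is finite). -/
def IsSymmMeasure (μ : Measure EReal) : Prop :=
  ∀ E : Set EReal, MeasurableSet E →
    ∫⁻ α in (fun a : EReal => -a) ⁻¹' E, wt α ∂μ = ∫⁻ α in E, wt α ∂μ

/-- Positive part of the Jordan decomposition. -/
def jp (x : SM) : Measure EReal := x.toJordanDecomposition.posPart

/-- Negative part of the Jordan decomposition. -/
def jn (x : SM) : Measure EReal := x.toJordanDecomposition.negPart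

instance (x : SM) : IsFiniteMeasure (jp x) := x.toJordanDecomposition.posPart_finite

instance (x : SM) : IsFiniteMeasure (jn x) := x.toJordanDecomposition.negPart_finite

/-- A finite signed Borel measure on `ℝ̄` is symmetric iff both parts of its Jordan
decomposition are symmetric measures. -/
def IsSymm (x : SM) : Prop := IsSymmMeasure (jp x) ∧ IsSymmMeasure (jn x)

/-- Membership in `X`, the set of symmetric probability measures on `ℝ̄`. -/
def MemX (x : SM) : Prop :=
  (∃ (μ : Measure EReal) (hμ : IsProbabilityMeasure μ),
      x = (letI := hμ; μ.toSignedMeasure)) ∧ IsSymm x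

/-- Membership in `X_d`, the set of differences of symmetric probability measures. -/
def MemXd (y : SM) : Prop := ∃ x1 x2 : SM, MemX x1 ∧ MemX x2 ∧ y = x1 - x2

/-- Integral of a real function against a finite signed measure. -/
def sInt (f : EReal → ℝ) (x : SM) : ℝ := (∫ α, f α ∂(jp x)) - ∫ α, f α ∂(jn x)

/-- `tanh(α/2)` extended continuously to `ℝ̄`. -/
def tanhHalf (α : EReal) : ℝ :=
  if α = ⊤ then 1 else if α = ⊥ then -1 else Real.tanh (α.toReal / 2)

/-- The inverse hyperbolic tangent on `(-1, 1)`. -/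
def artanh (t : ℝ) : ℝ := Real.log ((1 + t) / (1 - t)) / 2

/-- `2 tanh⁻¹(t)` valued in `ℝ̄` (sending `t ≥ 1` to `+∞` and `t ≤ -1` to `-∞`). -/
def atanhTwo (t : ℝ) : EReal :=
  if 1 ≤ t then ⊤ else if t ≤ -1 then ⊥ else ((2 * artanh t : ℝ) : EReal)

/-- Variable-node convolution `⊛` of two (nonnegative) measures:
`(μ ⊛ ν)(E) = ∫ μ(E - α) ν(dα)`, i.e. the pushforward of `μ × ν` under addition. -/
def mConv (μ ν : Measure EReal) : Measure EReal :=
  (μ.prod ν).map fun p => p.1 + p.2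

/-- Check-node convolution `⊠` of two (nonnegative) measures:
`(μ ⊠ ν)(E) = ∫ μ(2 tanh⁻¹(tanh(E/2) / tanh(α/2))) ν(dα)`, where the argument of `μ`
is the image of `E` under `β ↦ 2 tanh⁻¹(tanh(β/2) / tanh(α/2))`; equivalently, the
pushforward of `μ × ν` under `(β, α) ↦ 2 tanh⁻¹(tanh(β/2) · tanh(α/2))`. -/
def mCheck (μ ν : Measure EReal) : Measure EReal :=
  (μ.prod ν).map fun p => atanhTwo (tanhHalf p.1 * tanhHalf p.2)

instance (μ ν : Measure EReal) [IsFiniteMeasure μ] [IsFiniteMeasure ν] :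
    IsFiniteMeasure (mConv μ ν) := by unfold mConv; infer_instance

instance (μ ν : Measure EReal) [IsFiniteMeasure μ] [IsFiniteMeasure ν] :
    IsFiniteMeasure (mCheck μ ν) := by unfold mCheck; infer_instance

/-- The variable-node operation `⊛` extended bilinearly to finite signed measures. -/
def sConv (x y : SM) : SM :=
  (mConv (jp x) (jp y)).toSignedMeasure - (mConv (jp x) (jn y)).toSignedMeasure
    - (mConv (jn x) (jp y)).toSignedMeasure + (mConv (jn x) (jn y)).toSignedMeasure

/-- The check-node operation `⊠` extended bilinearly to finite signed measures. -/
def sCheck (x y : SM) : SM :=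
  (mCheck (jp x) (jp y)).toSignedMeasure - (mCheck (jp x) (jn y)).toSignedMeasure
    - (mCheck (jn x) (jp y)).toSignedMeasure + (mCheck (jn x) (jn y)).toSignedMeasure

/-!
Write `t = tanh (α / 2)`. The densities `e^{-α/2}` and `1 - t` differ by the even factor
`cosh (α / 2)` (away from `α = -∞`, which symmetry makes null), so a measure `μ` is symmetric iff
`(1 - t) μ` is invariant under negation. Under `⊠` the values of `t` multiply, and
`2 (1 - s t) = (1 - s) (1 + t) + (1 + s) (1 - t)`: integrating out `s` in the first term and `t` in
the second, the symmetry of each factor makes each term invariant under negation.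
-/

end SCLDPC

open scoped ENNReal

namespace MeasureTheory

variable {G : Type*} [MeasurableSpace G] [InvolutiveNeg G] [MeasurableNeg G]

theorem isNegInvariant_withDensity_iff {μ : Measure G} {f : G → ℝ≥0∞} (hf : Measurable f) :
    (μ.withDensity f).IsNegInvariant ↔
      ∀ g : G → ℝ≥0∞, Measurable g → ∫⁻ x, f x * g (-x) ∂μ = ∫⁻ x, f x * g x ∂μ := by
  have hwd {g : G → ℝ≥0∞} (hg : Measurable g) :
      ∫⁻ x, f x * g x ∂μ = ∫⁻ x, g x ∂μ.withDensity f :=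
    (lintegral_withDensity_eq_lintegral_mul μ hf hg).symm
  constructor
  · intro _ g hg
    rw [hwd hg, hwd (g := fun x => g (-x)) (hg.comp measurable_neg)]
    exact lintegral_neg_eq_self g
  · refine fun h => ⟨Measure.ext_of_lintegral _ fun g hg => ?_⟩
    rw [Measure.neg, lintegral_map hg measurable_neg, ← hwd hg,
      ← hwd (g := fun x => g (-x)) (hg.comp measurable_neg)]
    exact h g hg

theorem Measure.IsNegInvariant.withDensity {ν : Measure G} [ν.IsNegInvariant] {c : G → ℝ≥0∞}
    (hc : Measurable c) (hc_neg : ∀ x, c (-x) = c x) : (ν.withDensity c).IsNegInvariant := by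
  refine (isNegInvariant_withDensity_iff hc).2 fun g _ => ?_
  calc ∫⁻ x, c x * g (-x) ∂ν = ∫⁻ x, c (-x) * g (-x) ∂ν := by simp only [hc_neg]
    _ = ∫⁻ x, c x * g x ∂ν := lintegral_neg_eq_self fun x => c x * g x

theorem isNegInvariant_withDensity_of_ae_eq_mul {μ : Measure G} {f g c : G → ℝ≥0∞}
    (hf : Measurable f) (hc : Measurable c) (hc_neg : ∀ x, c (-x) = c x) (hfg : g =ᵐ[μ] f * c)
    (h : (μ.withDensity f).IsNegInvariant) : (μ.withDensity g).IsNegInvariant := by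
  rw [withDensity_congr_ae hfg, withDensity_mul μ hf hc]
  exact h.withDensity hc hc_neg

theorem lintegral_prod_mul_neg_fst {H : Type*} [MeasurableSpace H] {μ : Measure G} {ν : Measure H}
    [SFinite μ] [SFinite ν] {f : G → ℝ≥0∞} (hf : Measurable f)
    (h : (μ.withDensity f).IsNegInvariant)
    {F : G × H → ℝ≥0∞} (hF : Measurable F) :
    ∫⁻ p, f p.1 * F (-p.1, p.2) ∂μ.prod ν = ∫⁻ p, f p.1 * F p ∂μ.prod ν := by
  rw [lintegral_prod_symm _ (by fun_prop), lintegral_prod_symm _ (by fun_prop)]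
  exact lintegral_congr fun y =>
    (isNegInvariant_withDensity_iff hf).1 h (fun x => F (x, y)) (by fun_prop)

theorem lintegral_prod_mul_neg_snd {H : Type*} [MeasurableSpace H] {μ : Measure H} {ν : Measure G}
    [SFinite ν] {f : G → ℝ≥0∞} (hf : Measurable f) (h : (ν.withDensity f).IsNegInvariant)
    {F : H × G → ℝ≥0∞} (hF : Measurable F) :
    ∫⁻ p, f p.2 * F (p.1, -p.2) ∂μ.prod ν = ∫⁻ p, f p.2 * F p ∂μ.prod ν := by
  rw [lintegral_prod _ (by fun_prop), lintegral_prod _ (by fun_prop)]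
  exact lintegral_congr fun x =>
    (isNegInvariant_withDensity_iff hf).1 h (fun y => F (x, y)) (by fun_prop)

end MeasureTheory

namespace SCLDPC

@[fun_prop]
theorem measurable_wt : Measurable wt :=
  EReal.measurable_of_measurable_real <| by simpa [wt] using by fun_prop

@[fun_prop]
theorem measurable_tanhHalf : Measurable tanhHalf :=
  EReal.measurable_of_measurable_real <| by
    simpa [tanhHalf, tanh_eq_sinh_div_cosh] using by fun_prop

@[fun_prop]
theorem measurable_atanhTwo : Measurable atanhTwo := by
  unfold atanhTwo SCLDPC.artanh
  refine Measurable.ite (measurableSet_le measurable_const measurable_id) measurable_const ?_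
  refine Measurable.ite (measurableSet_le measurable_id measurable_const) measurable_const ?_
  fun_prop

theorem wt_coe (x : ℝ) : wt x = ENNReal.ofReal (exp (-x / 2)) := by simp [wt]

theorem tanhHalf_coe (x : ℝ) : tanhHalf x = tanh (x / 2) := by simp [tanhHalf]

theorem tanhHalf_neg (α : EReal) : tanhHalf (-α) = -tanhHalf α := by
  induction α using EReal.rec with
  | bot => simp [tanhHalf]
  | top => simp [tanhHalf]
  | coe x => rw [← EReal.coe_neg, tanhHalf_coe, tanhHalf_coe, neg_div, tanh_neg]

theorem tanhHalf_mem_Icc (α : EReal) : tanhHalf α ∈ Set.Icc (-1) 1 := by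
  induction α using EReal.rec with
  | bot => simp [tanhHalf]
  | top => simp [tanhHalf]
  | coe x => rw [tanhHalf_coe]; exact ⟨(neg_one_lt_tanh _).le, (tanh_lt_one _).le⟩

theorem atanhTwo_neg (t : ℝ) : atanhTwo (-t) = -atanhTwo t := by
  unfold atanhTwo
  split_ifs <;> try first | linarith | simp only [EReal.neg_top, EReal.neg_bot]
  rw [SCLDPC.artanh, SCLDPC.artanh, sub_neg_eq_add, ← sub_eq_add_neg, ← inv_div (1 + t),
    Real.log_inv, ← EReal.coe_neg]
  ring_nf

theorem tanhHalf_atanhTwo {t : ℝ} (ht : t ∈ Set.Icc (-1) 1) : tanhHalf (atanhTwo t) = t := by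
  unfold atanhTwo
  split_ifs with h1 h2
  · simp [tanhHalf, le_antisymm ht.2 h1]
  · simp [tanhHalf, le_antisymm h2 ht.1]
  · rw [tanhHalf_coe, mul_div_cancel_left₀ _ two_ne_zero, SCLDPC.artanh, div_eq_inv_mul,
      ← one_div, ← Real.artanh_eq_half_log ht, Real.tanh_artanh ⟨not_le.1 h2, not_le.1 h1⟩]

def oneSubTanhHalf (α : EReal) : ℝ≥0∞ := ENNReal.ofReal (1 - tanhHalf α)

@[fun_prop]
theorem measurable_oneSubTanhHalf : Measurable oneSubTanhHalf := by
  unfold oneSubTanhHalf; fun_prop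

theorem one_sub_tanh_half (x : ℝ) :
    1 - tanh (x / 2) = 2 * exp (-x / 2) / (exp (-x / 2) + exp (x / 2)) := by
  rw [tanh_eq, neg_div]
  field_simp
  ring

theorem oneSubTanhHalf_eq {α : EReal} (hα : α ≠ ⊥) :
    oneSubTanhHalf α = 2 * wt α / (wt α + wt (-α)) := by
  induction α using EReal.rec with
  | bot => exact absurd rfl hα
  | top => simp [oneSubTanhHalf, tanhHalf, wt]
  | coe x =>
    rw [oneSubTanhHalf, tanhHalf_coe, one_sub_tanh_half, ← EReal.coe_neg, wt_coe, wt_coe, neg_neg,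
      ENNReal.ofReal_div_of_pos (by positivity), ENNReal.ofReal_add (by positivity) (by positivity),
      ENNReal.ofReal_mul zero_le_two, ENNReal.ofReal_ofNat]

theorem wt_eq_oneSubTanhHalf_mul (α : EReal) :
    wt α = oneSubTanhHalf α * ((wt α + wt (-α)) / 2) := by
  induction α using EReal.rec with
  | bot => simp [oneSubTanhHalf, tanhHalf, wt, ENNReal.top_div_of_ne_top]
  | top => simp [oneSubTanhHalf, tanhHalf, wt]
  | coe x =>
    have hS0 : wt x + wt (-x) ≠ 0 := by simp [wt_coe, exp_pos]
    have hS : wt x + wt (-x) ≠ ⊤ := by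
      rw [← EReal.coe_neg, wt_coe, wt_coe]; exact ENNReal.add_ne_top.2 ⟨by simp, by simp⟩
    rw [oneSubTanhHalf_eq (EReal.coe_ne_bot x), div_eq_mul_inv, div_eq_mul_inv]
    calc wt x = wt x * ((wt x + wt (-x))⁻¹ * (wt x + wt (-x))) * (2 * 2⁻¹) := by
          rw [ENNReal.inv_mul_cancel hS0 hS,
            ENNReal.mul_inv_cancel two_ne_zero ENNReal.ofNat_ne_top, mul_one, mul_one]
      _ = _ := by ring

section

variable {μ : Measure EReal}

theorem isSymmMeasure_iff_isNegInvariant_withDensity_wt :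
    IsSymmMeasure μ ↔ (μ.withDensity wt).IsNegInvariant := by
  have hν : ∀ E, MeasurableSet E → ((μ.withDensity wt).neg E = (μ.withDensity wt) E ↔
      ∫⁻ α in (fun a : EReal => -a) ⁻¹' E, wt α ∂μ = ∫⁻ α in E, wt α ∂μ) := fun E hE => by
    rw [Measure.neg, Measure.map_apply measurable_neg hE, withDensity_apply _ (measurable_neg hE),
      withDensity_apply _ hE]
  refine ⟨fun h => ⟨Measure.ext fun E hE => (hν E hE).2 (h E hE)⟩, fun h E hE => ?_⟩
  exact (hν E hE).1 (by rw [h.neg_eq_self])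

theorem IsSymmMeasure.measure_bot (h : IsSymmMeasure μ) : μ {⊥} = 0 := by
  have hE := h {⊥} (measurableSet_singleton _)
  rw [show (fun a : EReal => -a) ⁻¹' {⊥} = {⊤} by ext; simp,
    lintegral_singleton, lintegral_singleton] at hE
  simpa [wt] using hE

theorem isSymmMeasure_iff_isNegInvariant_withDensity_oneSubTanhHalf :
    IsSymmMeasure μ ↔ (μ.withDensity oneSubTanhHalf).IsNegInvariant := by
  constructor
  · intro h
    have hbot : ∀ᵐ α ∂μ, α ≠ ⊥ := measure_eq_zero_iff_ae_notMem.1 h.measure_bot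
    rw [isSymmMeasure_iff_isNegInvariant_withDensity_wt] at h
    refine isNegInvariant_withDensity_of_ae_eq_mul measurable_wt
      (c := fun α => 2 / (wt α + wt (-α))) (by fun_prop) (fun α => by rw [neg_neg, add_comm]) ?_ h
    filter_upwards [hbot] with α hα
    rw [Pi.mul_apply, oneSubTanhHalf_eq hα, mul_comm 2, mul_div_assoc]
  · rw [isSymmMeasure_iff_isNegInvariant_withDensity_wt]
    refine isNegInvariant_withDensity_of_ae_eq_mul measurable_oneSubTanhHalf
      (c := fun α => (wt α + wt (-α)) / 2) (by fun_prop) (fun α => by rw [neg_neg, add_comm])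
      (Filter.Eventually.of_forall wt_eq_oneSubTanhHalf_mul)

end

theorem two_mul_oneSubTanhHalf_atanhTwo (β α : EReal) :
    2 * oneSubTanhHalf (atanhTwo (tanhHalf β * tanhHalf α)) =
      oneSubTanhHalf β * oneSubTanhHalf (-α) + oneSubTanhHalf (-β) * oneSubTanhHalf α := by
  obtain ⟨hs₁, hs₂⟩ := tanhHalf_mem_Icc β
  obtain ⟨ht₁, ht₂⟩ := tanhHalf_mem_Icc α
  have hst : tanhHalf β * tanhHalf α ∈ Set.Icc (-1) 1 := ⟨by nlinarith, by nlinarith⟩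
  simp only [oneSubTanhHalf, tanhHalf_atanhTwo hst, tanhHalf_neg, sub_neg_eq_add]
  rw [← ENNReal.ofReal_mul (by linarith), ← ENNReal.ofReal_mul (by linarith),
    ← ENNReal.ofReal_add (by nlinarith) (by nlinarith), ← ENNReal.ofReal_ofNat 2,
    ← ENNReal.ofReal_mul zero_le_two]
  ring_nf

variable {μ₁ μ₂ : Measure EReal}

theorem two_mul_lintegral_oneSubTanhHalf_check [SFinite μ₂] {k : EReal × EReal → ℝ≥0∞}
    (hk : Measurable k) :
    2 * ∫⁻ p, oneSubTanhHalf (atanhTwo (tanhHalf p.1 * tanhHalf p.2)) * k p ∂μ₁.prod μ₂ =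
      ∫⁻ p, oneSubTanhHalf p.1 * (oneSubTanhHalf (-p.2) * k p) ∂μ₁.prod μ₂ +
        ∫⁻ p, oneSubTanhHalf p.2 * (oneSubTanhHalf (-p.1) * k p) ∂μ₁.prod μ₂ := by
  rw [← lintegral_const_mul _ (by fun_prop), ← lintegral_add_left (by fun_prop)]
  refine lintegral_congr fun p => ?_
  rw [← mul_assoc, two_mul_oneSubTanhHalf_atanhTwo]
  ring

theorem isNegInvariant_withDensity_mCheck [SFinite μ₁] [SFinite μ₂]
    (h₁ : (μ₁.withDensity oneSubTanhHalf).IsNegInvariant)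
    (h₂ : (μ₂.withDensity oneSubTanhHalf).IsNegInvariant) :
    ((mCheck μ₁ μ₂).withDensity oneSubTanhHalf).IsNegInvariant := by
  set Z : EReal × EReal → EReal := fun p => atanhTwo (tanhHalf p.1 * tanhHalf p.2)
  have hZ : Measurable Z := by fun_prop
  have hZ_neg_fst (p : EReal × EReal) : Z (-p.1, p.2) = -Z p := by
    simp only [Z, tanhHalf_neg, neg_mul, atanhTwo_neg]
  have hZ_neg_snd (p : EReal × EReal) : Z (p.1, -p.2) = -Z p := by
    simp only [Z, tanhHalf_neg, mul_neg, atanhTwo_neg]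
  refine (isNegInvariant_withDensity_iff measurable_oneSubTanhHalf).2 fun g hg => ?_
  rw [mCheck, lintegral_map (by fun_prop) hZ, lintegral_map (by fun_prop) hZ,
    ← ENNReal.mul_right_inj two_ne_zero ENNReal.ofNat_ne_top,
    two_mul_lintegral_oneSubTanhHalf_check (by fun_prop),
    two_mul_lintegral_oneSubTanhHalf_check (by fun_prop)]
  congr 1
  · simpa only [hZ_neg_fst] using lintegral_prod_mul_neg_fst measurable_oneSubTanhHalf h₁
      (F := fun p => oneSubTanhHalf (-p.2) * g (Z p)) (by fun_prop)
  · simpa only [hZ_neg_snd] using lintegral_prod_mul_neg_snd measurable_oneSubTanhHalf h₂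
      (F := fun p => oneSubTanhHalf (-p.1) * g (Z p)) (by fun_prop)

theorem IsSymmMeasure.mCheck [SFinite μ₁] [SFinite μ₂] (h₁ : IsSymmMeasure μ₁)
    (h₂ : IsSymmMeasure μ₂) : IsSymmMeasure (mCheck μ₁ μ₂) := by
  rw [isSymmMeasure_iff_isNegInvariant_withDensity_oneSubTanhHalf] at *
  exact isNegInvariant_withDensity_mCheck h₁ h₂

theorem isSymmMeasure_zero : IsSymmMeasure 0 := fun _ _ => by simp

instance [IsProbabilityMeasure μ₁] [IsProbabilityMeasure μ₂] :
    IsProbabilityMeasure (mCheck μ₁ μ₂) :=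
  Measure.isProbabilityMeasure_map (by fun_prop)

theorem toJordanDecomposition_toSignedMeasure (μ : Measure EReal) [IsFiniteMeasure μ] :
    μ.toSignedMeasure.toJordanDecomposition = ⟨μ, 0, .zero_right⟩ := by
  rw [← JordanDecomposition.toJordanDecomposition_toSignedMeasure ⟨μ, 0, .zero_right⟩]
  simp [JordanDecomposition.toSignedMeasure]

@[simp]
theorem jp_toSignedMeasure (μ : Measure EReal) [IsFiniteMeasure μ] : jp μ.toSignedMeasure = μ := by
  rw [jp, toJordanDecomposition_toSignedMeasure]

@[simp]
theorem jn_toSignedMeasure (μ : Measure EReal) [IsFiniteMeasure μ] : jn μ.toSignedMeasure = 0 := by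
  rw [jn, toJordanDecomposition_toSignedMeasure]

@[simp]
theorem mCheck_zero_left (μ : Measure EReal) : mCheck 0 μ = 0 := by simp [mCheck]

@[simp]
theorem mCheck_zero_right (μ : Measure EReal) : mCheck μ 0 = 0 := by simp [mCheck]

theorem sCheck_toSignedMeasure [IsFiniteMeasure μ₁] [IsFiniteMeasure μ₂] :
    sCheck μ₁.toSignedMeasure μ₂.toSignedMeasure = (mCheck μ₁ μ₂).toSignedMeasure := by
  simp [sCheck]

theorem memX_toSignedMeasure (μ : Measure EReal) [IsProbabilityMeasure μ] (h : IsSymmMeasure μ) :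
    MemX μ.toSignedMeasure :=
  ⟨⟨μ, inferInstance, rfl⟩, by
    rw [IsSymm, jp_toSignedMeasure, jn_toSignedMeasure]; exact ⟨h, isSymmMeasure_zero⟩⟩

/-- If `x1` and `x2` are symmetric probability measures on the
extended reals, then `x1 ⊠ x2` is again a symmetric probability measure. -/
theorem check_mem_X (x1 x2 : SM) (h1 : MemX x1) (h2 : MemX x2) :
    MemX (sCheck x1 x2) := by
  obtain ⟨⟨μ₁, _, rfl⟩, hs₁, -⟩ := h1
  obtain ⟨⟨μ₂, _, rfl⟩, hs₂, -⟩ := h2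
  rw [jp_toSignedMeasure] at hs₁ hs₂
  rw [sCheck_toSignedMeasure]
  exact memX_toSignedMeasure _ (hs₁.mCheck hs₂)

end SCLDPC
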